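/- For the parameter choice r_L = 1/19, PH3 satisfies PH3_{1/19}(I) ≤ (33/19)·OPT(I) + 9/2 for every finite list I of items in (0,1]. In particular, PH3 with r_L = 1/19 is asymptotically (33/19)-competitive. -/

import Mathlib

/-- A packing of the list `I` of item sizes into `m` unit-capacity bins:
an assignment of item indices to bins such that each bin's contents sum to at most 1. -/
def IsPacking (I : List ℝ) (m : ℕ) (f : Fin I.length → Fin m) : Prop :=
  ∀ b : Fin m, ∑ i ∈ Finset.univ.filter (fun i => f i = b), I.get i ≤ 1

/-- `OPT I` is the minimum number of unit-capacity bins needed to pack `I`. -/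
noncomputable def OPT (I : List ℝ) : ℕ :=
  sInf {m | ∃ f : Fin I.length → Fin m, IsPacking I m f}

/-- The state maintained by the online algorithm PH3:
* `nXL`: number of XL-bins (each holds one extra large item);
* `nLarge`: number of large items so far, i.e. number of L-bins whose 2/3-sub-bin is used;
* `nM`: number of M-bins; `mOpen`: whether the current M-bin contains exactly one medium item;
* `nS`: number of S-bins; `sLevel`: level of the currently open S-bin;
* `nLS`: number of 1/3-sub-bins of L-bins used by small items so far;
  `lsLevel`: level of the currently open 1/3-sub-bin;
* `sizeSL`: total size of small items packed into L-bins so far;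
* `sizeS`: total size of all small items packed so far. -/
structure PH3State where
  nXL : ℕ
  nLarge : ℕ
  nM : ℕ
  mOpen : Bool
  nS : ℕ
  sLevel : ℝ
  nLS : ℕ
  lsLevel : ℝ
  sizeSL : ℝ
  sizeS : ℝ

/-- One step of PH3 with parameter `rL`: how the state changes upon arrival of item `a`.
Extra large items (`a ≥ 2/3`) get a new XL-bin; large items (`1/2 < a < 2/3`) get (the
2/3-sub-bin of) a new L-bin; medium items (`1/3 < a ≤ 1/2`) are paired in M-bins; a small
item (`a ≤ 1/3`) goes next-fit into the 1/3-sub-bins of L-bins if the total size of small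
items already packed into L-bins is smaller than `rL` times the total size of all small
items packed so far, and otherwise next-fit into S-bins. -/
noncomputable def PH3step (rL : ℝ) (st : PH3State) (a : ℝ) : PH3State :=
  if 2/3 ≤ a then
    { st with nXL := st.nXL + 1 }
  else if 1/2 < a then
    { st with nLarge := st.nLarge + 1 }
  else if 1/3 < a then
    if st.mOpen then { st with mOpen := false }
    else { st with nM := st.nM + 1, mOpen := true }
  else
    if st.sizeSL < rL * st.sizeS then
      -- pack into the 1/3-sub-bin of an L-bin, next-fit
      if st.nLS = 0 ∨ 1/3 < st.lsLevel + a then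
        { st with nLS := st.nLS + 1, lsLevel := a,
                  sizeSL := st.sizeSL + a, sizeS := st.sizeS + a }
      else
        { st with lsLevel := st.lsLevel + a,
                  sizeSL := st.sizeSL + a, sizeS := st.sizeS + a }
    else
      -- pack into an S-bin, next-fit
      if st.nS = 0 ∨ 1 < st.sLevel + a then
        { st with nS := st.nS + 1, sLevel := a, sizeS := st.sizeS + a }
      else
        { st with sLevel := st.sLevel + a, sizeS := st.sizeS + a }

/-- The number of bins used by PH3 with parameter `rL` on the input list `I`: the number of
XL-bins, plus the number of L-bins (an L-bin counts once whether it received a large item,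
small items, or both, so this is the maximum of `nLarge` and `nLS`), plus the number of
M-bins, plus the number of S-bins. -/
noncomputable def PH3 (rL : ℝ) (I : List ℝ) : ℕ :=
  let st := I.foldl (PH3step rL) ⟨0, 0, 0, false, 0, 0, 0, 0, 0, 0⟩
  st.nXL + max st.nLarge st.nLS + st.nM + st.nS

/-!
Three lower bounds on `OPT I` hold because a unit bin holds at most one item larger than `1/2`,
at most two items larger than `1/3`, and total size at most `1`. On the PH3 side, the routing
rule keeps the size of small items in L-bins within an additive constant of `r_L` times the
size of all small items; next fit fills every S-bin but the last to more than `2/3` (small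
items have size at most `1/3`), and any two consecutive `1/3`-sub-bins of L-bins to more than
`1/3`; every XL-, L- and M-bin but an open M-bin holds items of total size at least `2/3`,
`1/2` and `2/3` respectively. For `r_L = 1/19` a nonnegative combination of all these
inequalities, with total weight `33/19` on the lower bounds, bounds the number of bins
whichever of the two parts of the L-bins is used more.
-/

open Finset

theorem List.countP_eq_card_filter_get {α : Type*} (l : List α) (p : α → Bool) :
    l.countP p = #{i : Fin l.length | p (l.get i)} := by
  rw [card_filter]
  induction l with
  | nil => simp
  | cons a l ih =>
    rw [List.countP_cons, ih, add_comm]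
    exact (Fin.sum_univ_succ fun i : Fin (l.length + 1) =>
      if p ((a :: l).get i) then 1 else 0).symm

theorem List.countP_append_singleton {α : Type*} (l : List α) (a : α) (p : α → Prop)
    [DecidablePred p] :
    (l ++ [a]).countP (fun x => p x) = l.countP (fun x => p x) + if p a then 1 else 0 := by
  rw [List.countP_append, List.countP_singleton]
  simp only [decide_eq_true_eq]

namespace IsPacking

variable {I : List ℝ} {m : ℕ} {f : Fin I.length → Fin m}

theorem sum_le (hf : IsPacking I m f) : I.sum ≤ m := by
  rw [← Fin.sum_univ_getElem, ← sum_fiberwise univ f]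
  exact (sum_le_sum fun b _ => hf b).trans (by simp)

theorem card_le_of_forall_lt (hI : ∀ a ∈ I, 0 ≤ a) (hf : IsPacking I m f) {k : ℕ} {b : Fin m}
    {s : Finset (Fin I.length)} (hs : ∀ i ∈ s, f i = b ∧ 1 / (k + 1) < I.get i) : #s ≤ k := by
  by_contra! hk
  have hsub : s ⊆ ({i | f i = b} : Finset _) := fun i hi => by simpa using (hs i hi).1
  refine lt_irrefl (1 : ℝ) ?_
  calc (1 : ℝ)
      ≤ #s * (1 / (k + 1)) := by
        rw [mul_one_div, le_div_iff₀ (by positivity), one_mul]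
        exact_mod_cast hk
    _ = ∑ i ∈ s, 1 / ((k : ℝ) + 1) := by simp
    _ < ∑ i ∈ s, I.get i :=
      sum_lt_sum_of_nonempty (card_pos.mp (by omega)) fun i hi => (hs i hi).2
    _ ≤ ∑ i ∈ {i | f i = b}, I.get i :=
      sum_le_sum_of_subset_of_nonneg hsub fun i _ _ => hI _ (List.get_mem I i)
    _ ≤ 1 := hf b

theorem countP_le (hI : ∀ a ∈ I, 0 ≤ a) (hf : IsPacking I m f) (k : ℕ) :
    I.countP (fun a => (1 : ℝ) / (k + 1) < a) ≤ k * m :=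
  calc I.countP (fun a => (1 : ℝ) / (k + 1) < a)
      = ∑ b, #{i ∈ {i | (1 : ℝ) / (k + 1) < I.get i} | f i = b} := by
        rw [List.countP_eq_card_filter_get, card_eq_sum_card_fiberwise fun i _ => mem_univ (f i)]
        simp only [decide_eq_true_eq]
    _ ≤ ∑ _b : Fin m, k :=
      sum_le_sum fun b _ => hf.card_le_of_forall_lt hI (b := b) fun i hi => by simp_all
    _ = k * m := by simp [mul_comm]

end IsPacking

section OPT

variable {I : List ℝ}

theorem exists_isPacking_OPT (hI : ∀ a ∈ I, a ≤ 1) :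
    ∃ f : Fin I.length → Fin (OPT I), IsPacking I (OPT I) f :=
  Nat.sInf_mem (s := {m | ∃ f, IsPacking I m f})
    ⟨I.length, id, fun b => by simpa [filter_eq'] using hI _ (List.get_mem I b)⟩

theorem sum_le_OPT (hI : ∀ a ∈ I, a ≤ 1) : I.sum ≤ OPT I :=
  (exists_isPacking_OPT hI).choose_spec.sum_le

theorem countP_le_mul_OPT (hI₀ : ∀ a ∈ I, 0 ≤ a) (hI₁ : ∀ a ∈ I, a ≤ 1) (k : ℕ) :
    I.countP (fun a => (1 : ℝ) / (k + 1) < a) ≤ k * OPT I :=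
  (exists_isPacking_OPT hI₁).choose_spec.countP_le hI₀ k

end OPT

/-- The invariant of PH3 with parameter `r` in state `st`, after it has processed items of total
size `S`, `n₂` of which are larger than `1/2` and `n₃` larger than `1/3`. -/
structure PH3Inv (r S : ℝ) (n₂ n₃ : ℕ) (st : PH3State) : Prop where
  sLevel_nonneg : 0 ≤ st.sLevel
  lsLevel_nonneg : 0 ≤ st.lsLevel
  sizeSL_nonneg : 0 ≤ st.sizeSL
  sizeSL_le_sizeS : st.sizeSL ≤ st.sizeS
  sizeSL_le : st.sizeSL ≤ r * st.sizeS + 1 / 3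
  le_sizeSL : r * st.sizeS - r / 3 ≤ st.sizeSL
  nS_nextFit : 2 / 3 * ((st.nS : ℝ) - 1) + st.sLevel ≤ st.sizeS - st.sizeSL
  nLS_nextFit : ((st.nLS : ℝ) - 1) / 3 ≤ 2 * st.sizeSL - st.lsLevel
  nXL_add_nLarge : st.nXL + st.nLarge = n₂
  nXL_add_nLarge_add_nM : st.nXL + st.nLarge + 2 * st.nM = n₃ + st.mOpen.toNat
  weight_le : 2 / 3 * (st.nXL : ℝ) + 1 / 2 * st.nLarge + 2 / 3 * st.nM + st.sizeS ≤
    S + 1 / 3 * st.mOpen.toNat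

namespace PH3Inv

variable {r S a : ℝ} {n₂ n₃ : ℕ} {st : PH3State}

theorem init (hr : 0 ≤ r) : PH3Inv r 0 0 0 ⟨0, 0, 0, false, 0, 0, 0, 0, 0, 0⟩ := by
  constructor <;> norm_num [div_nonneg hr]

theorem step_of_half_lt (ha : 1 / 2 < a) (h : PH3Inv r S n₂ n₃ st) :
    PH3Inv r (S + a) (n₂ + 1) (n₃ + 1) (PH3step r st a) := by
  have hc₂ := h.nXL_add_nLarge
  have hc₃ := h.nXL_add_nLarge_add_nM
  have hw := h.weight_le
  simp only [PH3step, if_pos ha]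
  split_ifs <;>
    refine { h with nXL_add_nLarge := ?_, nXL_add_nLarge_add_nM := ?_, weight_le := ?_ } <;>
    dsimp only <;> push_cast <;> linarith

theorem step_of_third_lt_of_le_half (ha : 1 / 3 < a) (ha' : a ≤ 1 / 2)
    (h : PH3Inv r S n₂ n₃ st) :
    PH3Inv r (S + a) n₂ (n₃ + 1) (PH3step r st a) := by
  have hc₃ := h.nXL_add_nLarge_add_nM
  have hw := h.weight_le
  simp only [PH3step, if_neg (show ¬ 2 / 3 ≤ a by linarith), if_neg (not_lt.mpr ha'), if_pos ha]
  cases hOpen : st.mOpen <;> simp only [hOpen, Bool.toNat_true, Bool.toNat_false] at hc₃ hw <;>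
    refine { h with nXL_add_nLarge_add_nM := ?_, weight_le := ?_ } <;>
    simp only [Bool.toNat_true, Bool.toNat_false, Bool.false_eq_true, ↓reduceIte] <;>
    push_cast at hw ⊢ <;> linarith

theorem step_of_le_third_of_sizeSL_lt (hr₀ : 0 ≤ r) (hr₁ : r ≤ 1) (ha₀ : 0 ≤ a)
    (ha : a ≤ 1 / 3) (hSL : st.sizeSL < r * st.sizeS) (h : PH3Inv r S n₂ n₃ st) :
    PH3Inv r (S + a) n₂ n₃ (PH3step r st a) := by
  obtain ⟨hsl, hll, ht₀, hts, htu, htl, hnS, hnLS, hc₂, hc₃, hw⟩ := h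
  have hra₀ : 0 ≤ r * a := mul_nonneg hr₀ ha₀
  have hra₁ : r * a ≤ a := mul_le_of_le_one_left ha₀ hr₁
  simp only [PH3step, if_neg (show ¬ 2 / 3 ≤ a by linarith),
    if_neg (show ¬ 1 / 2 < a by linarith), if_neg (show ¬ 1 / 3 < a by linarith), if_pos hSL]
  split_ifs with hnew
  · have : (st.nLS : ℝ) / 3 ≤ 2 * st.sizeSL + a := by
      rcases hnew with h0 | hover
      · simp only [h0, CharP.cast_eq_zero]; linarith
      · linarith
    constructor <;> push_cast <;> linarith
  · push Not at hnew
    constructor <;> dsimp only <;> linarith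

theorem step_of_le_third_of_le_sizeSL (hr₀ : 0 ≤ r) (ha₀ : 0 ≤ a) (ha : a ≤ 1 / 3)
    (hSL : r * st.sizeS ≤ st.sizeSL) (h : PH3Inv r S n₂ n₃ st) :
    PH3Inv r (S + a) n₂ n₃ (PH3step r st a) := by
  obtain ⟨hsl, hll, ht₀, hts, htu, htl, hnS, hnLS, hc₂, hc₃, hw⟩ := h
  have hra₀ : 0 ≤ r * a := mul_nonneg hr₀ ha₀
  have hra : r * a ≤ r / 3 := by nlinarith
  simp only [PH3step, if_neg (show ¬ 2 / 3 ≤ a by linarith),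
    if_neg (show ¬ 1 / 2 < a by linarith), if_neg (show ¬ 1 / 3 < a by linarith),
    if_neg (not_lt.mpr hSL)]
  split_ifs with hnew
  · have : 2 / 3 * (st.nS : ℝ) ≤ st.sizeS - st.sizeSL := by
      rcases hnew with h0 | hover
      · simp only [h0, CharP.cast_eq_zero]; linarith
      · linarith
    constructor <;> push_cast <;> linarith
  · push Not at hnew
    constructor <;> dsimp only <;> linarith

theorem step (hr₀ : 0 ≤ r) (hr₁ : r ≤ 1) (ha₀ : 0 ≤ a) (h : PH3Inv r S n₂ n₃ st) :
    PH3Inv r (S + a) (n₂ + if 1 / 2 < a then 1 else 0) (n₃ + if 1 / 3 < a then 1 else 0)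
      (PH3step r st a) := by
  rcases lt_or_ge (1 / 2) a with ha | ha
  · rw [if_pos ha, if_pos (by linarith)]
    exact h.step_of_half_lt ha
  rw [if_neg (not_lt.mpr ha), add_zero]
  rcases lt_or_ge (1 / 3) a with ha' | ha'
  · rw [if_pos ha']
    exact h.step_of_third_lt_of_le_half ha' ha
  rw [if_neg (not_lt.mpr ha'), add_zero]
  rcases lt_or_ge st.sizeSL (r * st.sizeS) with hSL | hSL
  · exact h.step_of_le_third_of_sizeSL_lt hr₀ hr₁ ha₀ ha' hSL
  · exact h.step_of_le_third_of_le_sizeSL hr₀ ha₀ ha' hSL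

theorem foldl (hr₀ : 0 ≤ r) (hr₁ : r ≤ 1) {I : List ℝ} (hI : ∀ a ∈ I, 0 ≤ a) :
    PH3Inv r I.sum (I.countP (fun a => (1 : ℝ) / 2 < a)) (I.countP (fun a => (1 : ℝ) / 3 < a))
      (I.foldl (PH3step r) ⟨0, 0, 0, false, 0, 0, 0, 0, 0, 0⟩) := by
  induction I using List.reverseRecOn with
  | nil => exact init hr₀
  | append_singleton l a ih =>
    simp only [List.mem_append, List.mem_singleton] at hI
    rw [List.foldl_append, List.foldl_cons, List.foldl_nil, List.sum_append, List.sum_singleton,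
      List.countP_append_singleton, List.countP_append_singleton]
    exact (ih fun b hb => hI b (.inl hb)).step hr₀ hr₁ (hI a (.inr rfl))

theorem nS_le (h : PH3Inv r S n₂ n₃ st) :
    (st.nS : ℝ) ≤ 3 / 2 * (st.sizeS - st.sizeSL) + 1 := by
  linarith [h.nS_nextFit, h.sLevel_nonneg]

theorem nLS_le (h : PH3Inv r S n₂ n₃ st) : (st.nLS : ℝ) ≤ 6 * st.sizeSL + 1 := by
  linarith [h.nLS_nextFit, h.lsLevel_nonneg]

theorem bins_le (h : PH3Inv (1 / 19) S n₂ n₃ st) {m : ℝ} (h₂ : (n₂ : ℝ) ≤ m)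
    (h₃ : (n₃ : ℝ) ≤ 2 * m) (hS : S ≤ m) :
    ((st.nXL + max st.nLarge st.nLS + st.nM + st.nS : ℕ) : ℝ) ≤ 33 / 19 * m + 9 / 2 := by
  have hc₂ : (st.nXL : ℝ) + st.nLarge = n₂ := by exact_mod_cast h.nXL_add_nLarge
  have hc₃ : (st.nXL : ℝ) + st.nLarge + 2 * st.nM = n₃ + st.mOpen.toNat := by
    exact_mod_cast h.nXL_add_nLarge_add_nM
  have hopen : (st.mOpen.toNat : ℝ) ≤ 1 := by exact_mod_cast Bool.toNat_le st.mOpen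
  have hw := h.weight_le
  have hnS := h.nS_le
  have hnLS := h.nLS_le
  have hlo := h.le_sizeSL
  have hhi := h.sizeSL_le
  push_cast
  -- If `nLarge` dominates, add `5/19`, `1/38` and `27/19` times the three lower bounds;
  -- otherwise `33/19` times the size bound suffices.
  rcases le_total (st.nLS : ℝ) st.nLarge with hmax | hmax
  · rw [max_eq_left hmax]
    linarith
  · rw [max_eq_right hmax]
    linarith

end PH3Inv

/-- PH3 with the optimal single-copy parameter `r_L = 1/19` is asymptotically
`33/19`-competitive: `PH3_{1/19}(I) ≤ (33/19)·OPT(I) + 9/2` for every input list `I` of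
items in `(0,1]`. -/
theorem PH3_single_copy_competitive (I : List ℝ) (hI : ∀ a ∈ I, 0 < a ∧ a ≤ 1) :
    (PH3 (1/19) I : ℝ) ≤ 33/19 * (OPT I : ℝ) + 9/2 := by
  have hI₀ : ∀ a ∈ I, 0 ≤ a := fun a ha => (hI a ha).1.le
  have hI₁ : ∀ a ∈ I, a ≤ 1 := fun a ha => (hI a ha).2
  have h₂ := countP_le_mul_OPT hI₀ hI₁ 1
  have h₃ := countP_le_mul_OPT hI₀ hI₁ 2
  norm_num at h₂ h₃
  exact (PH3Inv.foldl (by norm_num) (by norm_num) hI₀).bins_le (by exact_mod_cast h₂)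
    (by exact_mod_cast h₃) (sum_le_OPT hI₁)
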